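/- Let (a,b) be a perplex parameter and let f : ℝ² → ℝ² be ℙ_{a,b}-differentiable with derivative f'. Then for every x ∈ ℝ², the real differential Df(x) : ℝ² → ℝ² (the Fréchet derivative of f as a real map) fails to be invertible if and only if f'(x) is not invertible for *, equivalently if and only if N(f'(x)) = 0, where N(y) := (a₁b₂ − a₂b₁)y₁² + (a₁b₃ − a₃b₁)y₁y₂ − (a₁a₃ − a₂²)y₂². -/

import Mathlib

open Filter Topology

noncomputable section

/-- The perplex product on `ℝ²` determined by the parameters `a = (a₁,a₂,a₃)`,
`b = (b₁,b₂,b₃)`. -/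
def pmul (a₁ a₂ a₃ b₁ b₂ b₃ : ℝ) (x y : ℝ × ℝ) : ℝ × ℝ :=
  (a₁ * x.1 * y.1 + a₂ * (x.1 * y.2 + x.2 * y.1) + a₃ * x.2 * y.2,
   b₁ * x.1 * y.1 + b₂ * (x.1 * y.2 + x.2 * y.1) + b₃ * x.2 * y.2)

/-- `(a,b)` is a perplex parameter: conditions (i)-(iv). -/
def IsPerplexParam (a₁ a₂ a₃ b₁ b₂ b₃ : ℝ) : Prop :=
  a₁ * a₃ - a₂ ^ 2 ≠ 0 ∧ a₁ * b₂ - a₂ * b₁ ≠ 0 ∧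
    a₂ * b₂ - a₃ * b₁ = 0 ∧ a₁ * a₃ - a₂ ^ 2 + a₂ * b₃ - a₃ * b₂ = 0

/-- The multiplicative identity `𝟙` of the perplex algebra. -/
def pone (a₁ a₂ b₁ b₂ : ℝ) : ℝ × ℝ :=
  (1 / (a₁ * b₂ - a₂ * b₁)) • ((b₂, -b₁) : ℝ × ℝ)

/-- The perplex norm `N`. -/
def pN (a₁ a₂ a₃ b₁ b₂ b₃ : ℝ) (x : ℝ × ℝ) : ℝ :=
  (a₁ * b₂ - a₂ * b₁) * x.1 ^ 2 + (a₁ * b₃ - a₃ * b₁) * x.1 * x.2 -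
    (a₁ * a₃ - a₂ ^ 2) * x.2 ^ 2

/-- The Euclidean norm on `ℝ²`. -/
noncomputable def enorm2 (x : ℝ × ℝ) : ℝ := Real.sqrt (x.1 ^ 2 + x.2 ^ 2)

open Classical in
/-- The `*`-inverse of `x` (junk value `0` if `x` is not invertible). -/
noncomputable def pinv (a₁ a₂ a₃ b₁ b₂ b₃ : ℝ) (x : ℝ × ℝ) : ℝ × ℝ :=
  if h : ∃ y, pmul a₁ a₂ a₃ b₁ b₂ b₃ x y = pone a₁ a₂ b₁ b₂ then h.choose else 0

/-- A sequence of invertible elements converging to `0` that is positively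
separated from the zero-divisor directions. -/
def PosSep (a₁ a₂ a₃ b₁ b₂ b₃ : ℝ) (h : ℕ → ℝ × ℝ) : Prop :=
  (∀ n, ∃ y, pmul a₁ a₂ a₃ b₁ b₂ b₃ (h n) y = pone a₁ a₂ b₁ b₂) ∧
    Tendsto h atTop (nhds 0) ∧
      ∃ c > 0, ∀ n, c ≤ |pN a₁ a₂ a₃ b₁ b₂ b₃ ((enorm2 (h n))⁻¹ • h n)|

/-- `f` is `ℙ_{a,b}`-differentiable with (continuous) derivative `f'`. -/
def PDiff (a₁ a₂ a₃ b₁ b₂ b₃ : ℝ) (f f' : ℝ × ℝ → ℝ × ℝ) : Prop :=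
  Continuous f' ∧
    ∀ x, ∀ h : ℕ → ℝ × ℝ, PosSep a₁ a₂ a₃ b₁ b₂ b₃ h →
      Tendsto
        (fun n => pmul a₁ a₂ a₃ b₁ b₂ b₃ (f (x + h n) - f x)
          (pinv a₁ a₂ a₃ b₁ b₂ b₃ (h n)))
        atTop (nhds (f' x))

/-!
Multiplication by `c` in `ℙ_{a,b}` is a real linear map whose determinant is `N(c)`, and `c` is
`*`-invertible iff this map is onto, i.e. iff `N(c) ≠ 0`. Along a line `q + s • v` with
`N(v) ≠ 0` the increments `tₙ • v` are positively separated and `(tₙ • v)⁻¹ = tₙ⁻¹ • v⁻¹`, so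
`s ↦ f (q + s • v)` has derivative `f'(q) * v`. Taking for `v` the two coordinate vectors, the
partial derivatives of `f` exist and are continuous, so `Df(x)` is multiplication by `f'(x)`.
-/

lemma tendsto_nhdsWithin_of_seq_tendsto {X Y : Type*} [TopologicalSpace X]
    [FirstCountableTopology X] {s : Set X} {a : X} {F : X → Y} {l : Filter Y}
    (h : ∀ u : ℕ → X, (∀ n, u n ∈ s) → Tendsto u atTop (𝓝 a) → Tendsto (F ∘ u) atTop l) :
    Tendsto F (𝓝[s] a) l := by
  refine tendsto_of_seq_tendsto fun u hu => ?_
  obtain ⟨hua, hus⟩ := tendsto_nhdsWithin_iff.1 hu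
  obtain ⟨N, hN⟩ := eventually_atTop.1 hus
  exact (tendsto_add_atTop_iff_nat N).1 <|
    h _ (fun n => hN _ (Nat.le_add_left N n)) ((tendsto_add_atTop_iff_nat N).2 hua)

lemma enorm2_smul (s : ℝ) (x : ℝ × ℝ) : enorm2 (s • x) = |s| * enorm2 x := by
  rw [enorm2, enorm2, ← Real.sqrt_sq_eq_abs, ← Real.sqrt_mul (sq_nonneg s)]
  congr 1
  simp only [Prod.smul_fst, Prod.smul_snd, smul_eq_mul]
  ring

lemma enorm2_pos {x : ℝ × ℝ} (hx : x ≠ 0) : 0 < enorm2 x := by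
  refine Real.sqrt_pos.2 ?_
  rcases x with ⟨x₁, x₂⟩
  rcases not_and_or.1 fun h : x₁ = 0 ∧ x₂ = 0 => hx (Prod.ext h.1 h.2) with h | h <;> positivity

section Perplex

variable {a₁ a₂ a₃ b₁ b₂ b₃ : ℝ} {f f' : ℝ × ℝ → ℝ × ℝ}

lemma IsPerplexParam.b₂_sq_sub_b₁_mul_b₃ (hp : IsPerplexParam a₁ a₂ a₃ b₁ b₂ b₃) :
    b₂ ^ 2 - b₁ * b₃ = a₁ * b₂ - a₂ * b₁ := by
  obtain ⟨hQ, -, h₃, h₄⟩ := hp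
  rcases eq_or_ne a₂ 0 with rfl | ha₂
  · have ha₃ : a₃ ≠ 0 := by rintro rfl; simp at hQ
    have hb₁ : b₁ = 0 := by simpa [ha₃] using h₃
    subst hb₁
    have hb₂ : b₂ = a₁ := by
      have : a₃ * (a₁ - b₂) = 0 := by linear_combination h₄
      linarith [(mul_eq_zero.1 this).resolve_left ha₃]
    rw [hb₂]; ring
  · refine sub_eq_zero.1 ((mul_eq_zero.1 ?_).resolve_left ha₂)
    linear_combination (-b₁) * h₄ + (b₂ - a₁) * h₃

lemma pmul_comm (x y : ℝ × ℝ) : pmul a₁ a₂ a₃ b₁ b₂ b₃ x y = pmul a₁ a₂ a₃ b₁ b₂ b₃ y x := by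
  simp only [pmul, Prod.mk.injEq]; constructor <;> ring

lemma pmul_assoc (hp : IsPerplexParam a₁ a₂ a₃ b₁ b₂ b₃) (x y z : ℝ × ℝ) :
    pmul a₁ a₂ a₃ b₁ b₂ b₃ (pmul a₁ a₂ a₃ b₁ b₂ b₃ x y) z =
      pmul a₁ a₂ a₃ b₁ b₂ b₃ x (pmul a₁ a₂ a₃ b₁ b₂ b₃ y z) := by
  ext <;> simp only [pmul]
  · linear_combination (x.2 * y.1 * z.1 - x.1 * y.1 * z.2) * hp.2.2.1 +
      (x.2 * y.2 * z.1 - x.1 * y.2 * z.2) * hp.2.2.2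
  · linear_combination (x.1 * y.2 * z.2 - x.2 * y.2 * z.1) * hp.2.2.1 +
      (x.2 * y.1 * z.1 - x.1 * y.1 * z.2) * hp.b₂_sq_sub_b₁_mul_b₃

variable (a₁ a₂ a₃ b₁ b₂ b₃) in
def pmulL (c : ℝ × ℝ) : (ℝ × ℝ) →L[ℝ] (ℝ × ℝ) :=
  LinearMap.toContinuousLinearMap
    { toFun := pmul a₁ a₂ a₃ b₁ b₂ b₃ c
      map_add' := fun y z => by ext <;> simp only [pmul, Prod.fst_add, Prod.snd_add] <;> ring
      map_smul' := fun s y => by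
        ext <;> simp only [pmul, Prod.smul_fst, Prod.smul_snd, smul_eq_mul, RingHom.id_apply] <;> ring }

@[simp] lemma pmulL_apply (c y : ℝ × ℝ) :
    pmulL a₁ a₂ a₃ b₁ b₂ b₃ c y = pmul a₁ a₂ a₃ b₁ b₂ b₃ c y := rfl

lemma pmul_smul_right (s : ℝ) (x y : ℝ × ℝ) :
    pmul a₁ a₂ a₃ b₁ b₂ b₃ x (s • y) = s • pmul a₁ a₂ a₃ b₁ b₂ b₃ x y :=
  (pmulL a₁ a₂ a₃ b₁ b₂ b₃ x).map_smul s y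

lemma pmul_smul_left (s : ℝ) (x y : ℝ × ℝ) :
    pmul a₁ a₂ a₃ b₁ b₂ b₃ (s • x) y = s • pmul a₁ a₂ a₃ b₁ b₂ b₃ x y := by
  rw [pmul_comm, pmul_smul_right, pmul_comm]

lemma pone_pmul (hp : IsPerplexParam a₁ a₂ a₃ b₁ b₂ b₃) (z : ℝ × ℝ) :
    pmul a₁ a₂ a₃ b₁ b₂ b₃ (pone a₁ a₂ b₁ b₂) z = z := by
  have hscaled : pmul a₁ a₂ a₃ b₁ b₂ b₃ (b₂, -b₁) z = (a₁ * b₂ - a₂ * b₁) • z := by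
    ext <;> simp only [pmul, Prod.smul_fst, Prod.smul_snd, smul_eq_mul]
    · linear_combination z.2 * hp.2.2.1
    · linear_combination z.2 * hp.b₂_sq_sub_b₁_mul_b₃
  rw [pone, pmul_smul_left, hscaled, smul_smul, one_div, inv_mul_cancel₀ hp.2.1, one_smul]

lemma pmul_pone (hp : IsPerplexParam a₁ a₂ a₃ b₁ b₂ b₃) (z : ℝ × ℝ) :
    pmul a₁ a₂ a₃ b₁ b₂ b₃ z (pone a₁ a₂ b₁ b₂) = z := by
  rw [pmul_comm, pone_pmul hp]

lemma det_pmulL (hp : IsPerplexParam a₁ a₂ a₃ b₁ b₂ b₃) (c : ℝ × ℝ) :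
    LinearMap.det (pmulL a₁ a₂ a₃ b₁ b₂ b₃ c : (ℝ × ℝ) →ₗ[ℝ] (ℝ × ℝ)) =
      pN a₁ a₂ a₃ b₁ b₂ b₃ c := by
  rw [← LinearMap.det_toMatrix (Module.Basis.finTwoProd ℝ), Matrix.det_fin_two]
  simp only [Fin.isValue, LinearMap.toMatrix_apply, Module.Basis.finTwoProd_zero,
    ContinuousLinearMap.coe_coe, pmulL_apply, pmul, mul_one, mul_zero, zero_add, add_zero,
    Module.Basis.coe_finTwoProd_repr, Matrix.cons_val_zero, Module.Basis.finTwoProd_one,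
    Matrix.cons_val_one, Matrix.cons_val_fin_one, pN]
  linear_combination c.2 ^ 2 * hp.2.2.2

lemma bijective_pmulL_iff (hp : IsPerplexParam a₁ a₂ a₃ b₁ b₂ b₃) (c : ℝ × ℝ) :
    Function.Bijective (pmulL a₁ a₂ a₃ b₁ b₂ b₃ c) ↔ pN a₁ a₂ a₃ b₁ b₂ b₃ c ≠ 0 := by
  rw [← det_pmulL hp, ← isUnit_iff_ne_zero, ← LinearMap.isUnit_iff_isUnit_det,
    Module.End.isUnit_iff]
  rfl

lemma exists_pmul_eq_pone_iff (hp : IsPerplexParam a₁ a₂ a₃ b₁ b₂ b₃) (c : ℝ × ℝ) :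
    (∃ y, pmul a₁ a₂ a₃ b₁ b₂ b₃ c y = pone a₁ a₂ b₁ b₂) ↔ pN a₁ a₂ a₃ b₁ b₂ b₃ c ≠ 0 := by
  rw [← bijective_pmulL_iff hp]
  constructor
  · rintro ⟨y, hy⟩
    have hsurj : Function.Surjective (pmulL a₁ a₂ a₃ b₁ b₂ b₃ c) := fun z =>
      ⟨pmul a₁ a₂ a₃ b₁ b₂ b₃ y z, by rw [pmulL_apply, ← pmul_assoc hp, hy, pone_pmul hp]⟩
    exact ⟨LinearMap.injective_iff_surjective.2 hsurj, hsurj⟩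
  · exact fun hbij => hbij.2 _

lemma pmul_pinv (hp : IsPerplexParam a₁ a₂ a₃ b₁ b₂ b₃) {c : ℝ × ℝ}
    (hc : pN a₁ a₂ a₃ b₁ b₂ b₃ c ≠ 0) :
    pmul a₁ a₂ a₃ b₁ b₂ b₃ c (pinv a₁ a₂ a₃ b₁ b₂ b₃ c) = pone a₁ a₂ b₁ b₂ := by
  have h := (exists_pmul_eq_pone_iff hp c).2 hc
  rw [pinv, dif_pos h]
  exact h.choose_spec

lemma eq_pinv_of_pmul_eq_pone (hp : IsPerplexParam a₁ a₂ a₃ b₁ b₂ b₃) {c y : ℝ × ℝ}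
    (hy : pmul a₁ a₂ a₃ b₁ b₂ b₃ c y = pone a₁ a₂ b₁ b₂) : y = pinv a₁ a₂ a₃ b₁ b₂ b₃ c := by
  have hc : pN a₁ a₂ a₃ b₁ b₂ b₃ c ≠ 0 := (exists_pmul_eq_pone_iff hp c).1 ⟨y, hy⟩
  rw [← pmul_pone hp y, ← pmul_pinv hp hc, ← pmul_assoc hp, pmul_comm y, hy, pone_pmul hp]

lemma pN_smul (s : ℝ) (x : ℝ × ℝ) :
    pN a₁ a₂ a₃ b₁ b₂ b₃ (s • x) = s ^ 2 * pN a₁ a₂ a₃ b₁ b₂ b₃ x := by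
  simp only [pN, Prod.smul_fst, Prod.smul_snd, smul_eq_mul]; ring

lemma pinv_smul (hp : IsPerplexParam a₁ a₂ a₃ b₁ b₂ b₃) {v : ℝ × ℝ}
    (hv : pN a₁ a₂ a₃ b₁ b₂ b₃ v ≠ 0) {t : ℝ} (ht : t ≠ 0) :
    pinv a₁ a₂ a₃ b₁ b₂ b₃ (t • v) = t⁻¹ • pinv a₁ a₂ a₃ b₁ b₂ b₃ v := by
  refine (eq_pinv_of_pmul_eq_pone hp ?_).symm
  rw [pmul_smul_right, pmul_smul_left, smul_smul, inv_mul_cancel₀ ht, one_smul, pmul_pinv hp hv]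

lemma posSep_smul (hp : IsPerplexParam a₁ a₂ a₃ b₁ b₂ b₃) {v : ℝ × ℝ}
    (hv : pN a₁ a₂ a₃ b₁ b₂ b₃ v ≠ 0) {t : ℕ → ℝ} (ht : ∀ n, t n ≠ 0)
    (ht₀ : Tendsto t atTop (𝓝 0)) : PosSep a₁ a₂ a₃ b₁ b₂ b₃ (fun n => t n • v) := by
  have hv₀ : 0 < enorm2 v := enorm2_pos (by rintro rfl; simp [pN] at hv)
  refine ⟨fun n => (exists_pmul_eq_pone_iff hp _).2 ?_, by simpa using ht₀.smul_const v,
    |pN a₁ a₂ a₃ b₁ b₂ b₃ v| / enorm2 v ^ 2, by positivity, fun n => ?_⟩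
  · rw [pN_smul]; exact mul_ne_zero (pow_ne_zero 2 (ht n)) hv
  · have hscale : ((|t n| * enorm2 v)⁻¹ * t n) ^ 2 = (enorm2 v ^ 2)⁻¹ := by
      have := ht n
      field_simp
      rw [sq_abs]
    rw [enorm2_smul, smul_smul, pN_smul, hscale, abs_mul,
      abs_of_pos (a := (enorm2 v ^ 2)⁻¹) (by positivity), div_eq_inv_mul]

lemma continuous_pmul_right (v : ℝ × ℝ) : Continuous fun w => pmul a₁ a₂ a₃ b₁ b₂ b₃ w v :=
  (pmulL a₁ a₂ a₃ b₁ b₂ b₃ v).continuous.congr fun w => pmul_comm v w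

lemma hasDerivAt_comp_add_smul_zero (hp : IsPerplexParam a₁ a₂ a₃ b₁ b₂ b₃)
    (hf : PDiff a₁ a₂ a₃ b₁ b₂ b₃ f f') {v : ℝ × ℝ} (hv : pN a₁ a₂ a₃ b₁ b₂ b₃ v ≠ 0)
    (q : ℝ × ℝ) :
    HasDerivAt (fun s : ℝ => f (q + s • v)) (pmul a₁ a₂ a₃ b₁ b₂ b₃ (f' q) v) 0 := by
  rw [hasDerivAt_iff_tendsto_slope_zero]
  refine tendsto_nhdsWithin_of_seq_tendsto fun t ht ht₀ => ?_
  have hquot := hf.2 q _ (posSep_smul hp hv ht ht₀)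
  refine (((continuous_pmul_right v).tendsto _).comp hquot).congr fun n => ?_
  simp only [Function.comp_apply, zero_add, zero_smul, add_zero]
  rw [pinv_smul hp hv (ht n), pmul_smul_right, pmul_smul_left, pmul_assoc hp,
    pmul_comm _ v, pmul_pinv hp hv, pmul_pone hp]

lemma hasDerivAt_comp_add_smul (hp : IsPerplexParam a₁ a₂ a₃ b₁ b₂ b₃)
    (hf : PDiff a₁ a₂ a₃ b₁ b₂ b₃ f f') {v : ℝ × ℝ} (hv : pN a₁ a₂ a₃ b₁ b₂ b₃ v ≠ 0)
    (q : ℝ × ℝ) (t : ℝ) :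
    HasDerivAt (fun s : ℝ => f (q + s • v)) (pmul a₁ a₂ a₃ b₁ b₂ b₃ (f' (q + t • v)) v) t := by
  have h := HasDerivAt.comp_sub_const t t <| by
    rw [sub_self]; exact hasDerivAt_comp_add_smul_zero hp hf hv (q + t • v)
  refine h.congr_of_eventuallyEq (Eventually.of_forall fun s => ?_)
  show f (q + s • v) = f (q + t • v + (s - t) • v)
  rw [add_assoc, ← add_smul, add_sub_cancel]

lemma hasStrictFDerivAt_of_pDiff (hp : IsPerplexParam a₁ a₂ a₃ b₁ b₂ b₃)
    (hf : PDiff a₁ a₂ a₃ b₁ b₂ b₃ f f') (x : ℝ × ℝ) :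
    HasStrictFDerivAt f (pmulL a₁ a₂ a₃ b₁ b₂ b₃ (f' x)) x := by
  have hN₁ : pN a₁ a₂ a₃ b₁ b₂ b₃ (1, 0) ≠ 0 := by simpa [pN] using hp.2.1
  have hN₂ : pN a₁ a₂ a₃ b₁ b₂ b₃ (0, 1) ≠ 0 := by simpa [pN, sub_eq_zero, eq_comm] using hp.1
  refine (hasStrictFDerivAt_uncurry_coprod (𝕜 := ℝ) (f := fun s t => f (s, t))
    (f₁ := fun s t => .toSpanSingleton ℝ (pmul a₁ a₂ a₃ b₁ b₂ b₃ (f' (s, t)) (1, 0)))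
    (f₂ := fun s t => .toSpanSingleton ℝ (pmul a₁ a₂ a₃ b₁ b₂ b₃ (f' (s, t)) (0, 1)))
    (u := x) (.of_forall fun p => ?_) (.of_forall fun p => ?_) ?_ ?_).congr_fderiv ?_
  · have h := hasDerivAt_comp_add_smul hp hf hN₁ (0, p.2) p.1
    simp only [Prod.smul_mk, smul_eq_mul, mul_one, mul_zero, Prod.mk_add_mk, add_zero, zero_add] at h
    exact h.hasFDerivAt
  · have h := hasDerivAt_comp_add_smul hp hf hN₂ (p.1, 0) p.2
    simp only [Prod.smul_mk, smul_eq_mul, mul_one, mul_zero, Prod.mk_add_mk, add_zero, zero_add] at h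
    exact h.hasFDerivAt
  · exact ((ContinuousLinearMap.toSpanSingletonLIE ℝ (ℝ × ℝ)).continuous.comp
      ((continuous_pmul_right _).comp hf.1)).continuousAt
  · exact ((ContinuousLinearMap.toSpanSingletonLIE ℝ (ℝ × ℝ)).continuous.comp
      ((continuous_pmul_right _).comp hf.1)).continuousAt
  · refine ContinuousLinearMap.ext fun z => ?_
    change z.1 • pmul a₁ a₂ a₃ b₁ b₂ b₃ (f' x) (1, 0) +
      z.2 • pmul a₁ a₂ a₃ b₁ b₂ b₃ (f' x) (0, 1) = pmul a₁ a₂ a₃ b₁ b₂ b₃ (f' x) z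
    rw [← pmul_smul_right, ← pmul_smul_right, ← pmulL_apply, ← pmulL_apply, ← map_add]
    simp

end Perplex

/-- Corollary 2.12: `x` is a critical point of `f` (as a real map) iff `f'(x)` is
not invertible for `*`, iff `N(f'(x)) = 0`. -/
theorem critical_point_iff (a₁ a₂ a₃ b₁ b₂ b₃ : ℝ)
    (hp : IsPerplexParam a₁ a₂ a₃ b₁ b₂ b₃)
    (f f' : ℝ × ℝ → ℝ × ℝ)
    (hdiff : PDiff a₁ a₂ a₃ b₁ b₂ b₃ f f') :
    ∀ x : ℝ × ℝ,
      ((¬ Function.Bijective (fderiv ℝ f x)) ↔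
        ¬ ∃ y : ℝ × ℝ, pmul a₁ a₂ a₃ b₁ b₂ b₃ (f' x) y = pone a₁ a₂ b₁ b₂) ∧
      ((¬ Function.Bijective (fderiv ℝ f x)) ↔ pN a₁ a₂ a₃ b₁ b₂ b₃ (f' x) = 0) := by
  intro x
  rw [(hasStrictFDerivAt_of_pDiff hp hdiff x).hasFDerivAt.fderiv, bijective_pmulL_iff hp,
    exists_pmul_eq_pone_iff hp]
  exact ⟨Iff.rfl, not_not⟩
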